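/- (Hijikata, case n = 2.) Let O be a discrete valuation ring with maximal ideal p and fraction field k, and let S be an O-order in M_2(k) containing the diagonal subring diag(O,O). Then there exist integers a, b with a + b ≥ 0 such that S = {A ∈ M_2(k) : A_{11}, A_{22} ∈ O, A_{12} ∈ p^a, A_{21} ∈ p^b}; moreover such a set is an order if and only if a + b ≥ 0, and is conjugate by a diagonal matrix to the order with entries (O, O; p^{a+b}, O). -/

import Mathlib

noncomputable section

/-- The fractional ideal `p^ν = π^ν O` inside `k`. -/
def pset (O : Type*) [CommRing O] {k : Type*} [Field k] [Algebra O k] (π : k) (ν : ℤ) :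
    Set k := {x : k | ∃ c : O, x = algebraMap O k c * π ^ ν}

/-- An `O`-order in `M_n(k)`: a subalgebra which is finitely generated as an `O`-module
and is a full lattice (every matrix has a nonzero `O`-multiple in it). -/
def IsOrder (O : Type*) [CommRing O] {k : Type*} [Field k] [Algebra O k] {n : ℕ}
    (S : Subalgebra O (Matrix (Fin n) (Fin n) k)) : Prop :=
  (Subalgebra.toSubmodule S).FG ∧
    ∀ A : Matrix (Fin n) (Fin n) k, ∃ c : O, c ≠ 0 ∧ algebraMap O k c • A ∈ S

/-- A subset of `M_n(k)` is an `O`-order if it is the underlying set of an order. -/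
def IsOrderSet (O : Type*) [CommRing O] {k : Type*} [Field k] [Algebra O k] {n : ℕ}
    (s : Set (Matrix (Fin n) (Fin n) k)) : Prop :=
  ∃ S : Subalgebra O (Matrix (Fin n) (Fin n) k),
    (S : Set (Matrix (Fin n) (Fin n) k)) = s ∧ IsOrder O S

/-- The maximal order `Λ(m₁,…,m_n) = {A : A_{ij} ∈ p^{m_i - m_j}}`. -/
def Lam (O : Type*) [CommRing O] {k : Type*} [Field k] [Algebra O k] {n : ℕ} (π : k)
    (m : Fin n → ℤ) : Set (Matrix (Fin n) (Fin n) k) :=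
  {A | ∀ i j, A i j ∈ pset O π (m i - m j)}

/-- A maximal `O`-order. -/
def IsMaximalOrder (O : Type*) [CommRing O] {k : Type*} [Field k] [Algebra O k] {n : ℕ}
    (S : Subalgebra O (Matrix (Fin n) (Fin n) k)) : Prop :=
  IsOrder O S ∧ ∀ T : Subalgebra O (Matrix (Fin n) (Fin n) k), IsOrder O T → S ≤ T → T = S

/-- `m` is an integer point of the convex polytope `C(ν)` (in the hyperplane `x₁ = 0`). -/
def IntPt {n : ℕ} [NeZero n] (ν : Matrix (Fin n) (Fin n) ℤ) (m : Fin n → ℤ) : Prop :=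
  m 0 = 0 ∧ ∀ i j, -ν j i ≤ m i - m j ∧ m i - m j ≤ ν i j

/-- `ν` is reduced: `C(ν)` contains an integer point and every bounding hyperplane
`x_i - x_j = ν_{ij}` contains an integer point of `C(ν)`. -/
def Reduced {n : ℕ} [NeZero n] (ν : Matrix (Fin n) (Fin n) ℤ) : Prop :=
  (∃ m, IntPt ν m) ∧ ∀ i j, ∃ m, IntPt ν m ∧ m i - m j = ν i j

/-! The idempotents `E₁₁, E₂₂ ∈ S` split `S` entrywise: `E_{ii} A E_{jj} = A_{ij} E_{ij}`, so
`A ∈ S` iff `A_{ij} ∈ I_{ij} := {x : x E_{ij} ∈ S}` for all `i, j`. Each `I_{ij}` is a nonzero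
finitely generated `O`-submodule of `k`, hence a fractional ideal `p^{ν_{ij}}` of the DVR `O`.
Since `E_{ij} E_{jl} = E_{il}`, such an entrywise set is a ring iff `ν_{ii} ≤ 0` and
`ν_{il} ≤ ν_{ij} + ν_{jl}`, which for `ν = (0, a; b, 0)` reads `a + b ≥ 0`; conjugation by
`diag(π^{m_i})` shifts `ν_{ij}` by `m_i - m_j`. -/

section Pset

variable {O : Type*} [CommRing O] {k : Type*} [Field k] [Algebra O k]

theorem mem_pset {π x : k} {ν : ℤ} : x ∈ pset O π ν ↔ ∃ c : O, x = algebraMap O k c * π ^ ν :=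
  Iff.rfl

theorem pset_eq_span (π : k) (ν : ℤ) : pset O π ν = Submodule.span O {π ^ ν} := by
  ext x
  simp [pset, Submodule.mem_span_singleton, Algebra.smul_def, eq_comm]

theorem zero_mem_pset (π : k) (ν : ℤ) : (0 : k) ∈ pset O π ν := ⟨0, by simp⟩

theorem zpow_mem_pset (π : k) (ν : ℤ) : π ^ ν ∈ pset O π ν := ⟨1, by simp⟩

theorem algebraMap_mul_mem_pset {π x : k} {ν : ℤ} (c : O) (hx : x ∈ pset O π ν) :
    algebraMap O k c * x ∈ pset O π ν := by
  rw [pset_eq_span] at hx ⊢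
  simpa [Algebra.smul_def] using Submodule.smul_mem _ c hx

theorem add_mem_pset {π x y : k} {ν : ℤ} (hx : x ∈ pset O π ν) (hy : y ∈ pset O π ν) :
    x + y ∈ pset O π ν := by
  obtain ⟨c, rfl⟩ := hx
  obtain ⟨d, rfl⟩ := hy
  exact ⟨c + d, by rw [map_add, add_mul]⟩

theorem mul_mem_pset {π x y : k} (hπ : π ≠ 0) {ν μ : ℤ} (hx : x ∈ pset O π ν)
    (hy : y ∈ pset O π μ) : x * y ∈ pset O π (ν + μ) := by
  obtain ⟨c, rfl⟩ := hx
  obtain ⟨d, rfl⟩ := hy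
  exact ⟨c * d, by rw [map_mul, zpow_add₀ hπ]; ring⟩

theorem mul_zpow_mem_pset_iff {π x : k} (hπ : π ≠ 0) {ν μ : ℤ} :
    x * π ^ μ ∈ pset O π ν ↔ x ∈ pset O π (ν - μ) := by
  simp only [mem_pset, zpow_sub₀ hπ, ← mul_div_assoc, eq_div_iff (zpow_ne_zero μ hπ)]

variable [IsFractionRing O k] {ϖ : O}

theorem algebraMap_irreducible_ne_zero (hϖ : Irreducible ϖ) : algebraMap O k ϖ ≠ 0 := by
  simpa using hϖ.ne_zero

theorem zpow_mem_pset_iff (hϖ : Irreducible ϖ) {ν μ : ℤ} :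
    algebraMap O k ϖ ^ μ ∈ pset O (algebraMap O k ϖ) ν ↔ ν ≤ μ := by
  have hπ := algebraMap_irreducible_ne_zero (k := k) hϖ
  rw [← one_mul (_ ^ μ), mul_zpow_mem_pset_iff hπ]
  constructor
  · rintro ⟨c, hc⟩
    by_contra! h
    obtain ⟨n, hn⟩ : ∃ n : ℕ, ν - μ = n + 1 := ⟨(ν - μ - 1).toNat, by omega⟩
    have : c * ϖ ^ (n + 1) = 1 := IsFractionRing.injective O k <| by
      rw [map_mul, map_pow, map_one, ← zpow_natCast, Nat.cast_add_one, ← hn]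
      exact hc.symm
    exact hϖ.not_isUnit (IsUnit.of_mul_eq_one (c * ϖ ^ n) (by rw [← this]; ring))
  · intro h
    refine ⟨ϖ ^ (μ - ν).toNat, ?_⟩
    rw [map_pow, ← zpow_natCast, ← zpow_add₀ hπ, (by omega : ((μ - ν).toNat : ℤ) + (ν - μ) = 0),
      zpow_zero]

theorem pset_anti (hϖ : Irreducible ϖ) {ν μ : ℤ} (h : μ ≤ ν) :
    pset O (algebraMap O k ϖ) ν ⊆ pset O (algebraMap O k ϖ) μ := by
  rw [pset_eq_span, pset_eq_span, SetLike.coe_subset_coe, Submodule.span_singleton_le_iff_mem,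
    ← SetLike.mem_coe, ← pset_eq_span]
  exact (zpow_mem_pset_iff hϖ).2 h

variable [IsDomain O] [IsDiscreteValuationRing O]

theorem exists_coe_eq_pset_of_fg (hϖ : Irreducible ϖ) {M : Submodule O k} (hM : M.FG)
    (h : M ≠ ⊥) : ∃ ν : ℤ, (M : Set k) = pset O (algebraMap O k ϖ) ν := by
  obtain ⟨x, hx⟩ := (FractionalIdeal.isPrincipal
    (⟨M, FractionalIdeal.isFractional_of_fg hM⟩ : FractionalIdeal (nonZeroDivisors O) k)).principal
  change M = Submodule.span O {x} at hx
  have hx0 : x ≠ 0 := by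
    rintro rfl
    exact h (by simpa using hx)
  obtain ⟨ν, u, rfl⟩ := IsDiscreteValuationRing.exists_units_eq_smul_zpow_of_irreducible hϖ hx0
  exact ⟨ν, by rw [hx, Submodule.span_singleton_group_smul_eq, pset_eq_span]⟩

theorem exists_algebraMap_mul_mem_pset (hϖ : Irreducible ϖ) (x : k) (ν : ℤ) :
    ∃ c : O, c ≠ 0 ∧ algebraMap O k c * x ∈ pset O (algebraMap O k ϖ) ν := by
  rcases eq_or_ne x 0 with rfl | hx
  · exact ⟨1, one_ne_zero, ⟨0, by simp⟩⟩
  obtain ⟨μ, u, rfl⟩ := IsDiscreteValuationRing.exists_units_eq_smul_zpow_of_irreducible hϖ hx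
  refine ⟨ϖ ^ (ν - μ).toNat, pow_ne_zero _ hϖ.ne_zero, ?_⟩
  rw [Units.smul_def, Algebra.smul_def, mul_left_comm]
  refine algebraMap_mul_mem_pset _ ?_
  rw [map_pow, ← zpow_natCast, ← zpow_add₀ (algebraMap_irreducible_ne_zero hϖ)]
  exact (zpow_mem_pset_iff hϖ).2 (by omega)

end Pset

section MatrixPset

open Matrix

variable {O : Type*} [CommRing O] {k : Type*} [Field k] [Algebra O k] {ι : Type*}

variable (O) in
def matrixPset (π : k) (ν : Matrix ι ι ℤ) : Set (Matrix ι ι k) :=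
  {A | ∀ i j, A i j ∈ pset O π (ν i j)}

theorem setOf_fin_two_eq_matrixPset (π : k) (a b c d : ℤ) :
    {A : Matrix (Fin 2) (Fin 2) k | A 0 0 ∈ pset O π a ∧ A 0 1 ∈ pset O π b ∧
      A 1 0 ∈ pset O π c ∧ A 1 1 ∈ pset O π d} = matrixPset O π !![a, b; c, d] := by
  ext A
  simp [matrixPset, Fin.forall_fin_two, and_assoc]

theorem single_mem_matrixPset_iff [DecidableEq ι] {π x : k} {ν : Matrix ι ι ℤ} {i j : ι} :
    single i j x ∈ matrixPset O π ν ↔ x ∈ pset O π (ν i j) := by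
  refine ⟨fun h => by simpa using h i j, fun h a b => ?_⟩
  by_cases hab : i = a ∧ j = b
  · obtain ⟨rfl, rfl⟩ := hab
    simpa using h
  · rw [single_apply_of_ne (h := hab)]
    exact zero_mem_pset π _

variable (O) in
def matrixPsetSubmodule (π : k) (ν : Matrix ι ι ℤ) : Submodule O (Matrix ι ι k) where
  carrier := matrixPset O π ν
  add_mem' hA hB i j := add_mem_pset (hA i j) (hB i j)
  zero_mem' _ _ := zero_mem_pset π _
  smul_mem' c A hA i j := by
    simpa [Algebra.smul_def] using algebraMap_mul_mem_pset c (hA i j)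

theorem matrixPsetSubmodule_fg [Finite ι] (π : k) (ν : Matrix ι ι ℤ) :
    (matrixPsetSubmodule O π ν).FG := by
  let f : (ι → ι → O) →ₗ[O] Matrix ι ι k :=
    { toFun c := of fun i j => algebraMap O k (c i j) * π ^ ν i j
      map_add' c d := by ext; simp [add_mul]
      map_smul' c d := by ext; simp [Algebra.smul_def, mul_assoc] }
  have hrange : LinearMap.range f = matrixPsetSubmodule O π ν := by
    ext A
    refine ⟨?_, fun hA => ?_⟩
    · rintro ⟨c, rfl⟩ i j
      exact ⟨c i j, rfl⟩
    · choose c hc using hA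
      exact ⟨c, by ext i j; exact (hc i j).symm⟩
  rw [← hrange, LinearMap.range_eq_map]
  exact Submodule.FG.map f Module.Finite.fg_top

variable [IsFractionRing O k] {ϖ : O}

theorem mul_mem_matrixPset [Fintype ι] (hϖ : Irreducible ϖ) {ν : Matrix ι ι ℤ}
    (hν : ∀ i j l, ν i l ≤ ν i j + ν j l) {A B : Matrix ι ι k}
    (hA : A ∈ matrixPset O (algebraMap O k ϖ) ν) (hB : B ∈ matrixPset O (algebraMap O k ϖ) ν) :
    A * B ∈ matrixPset O (algebraMap O k ϖ) ν := by
  intro i l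
  rw [mul_apply, pset_eq_span]
  refine Submodule.sum_mem _ fun j _ => ?_
  rw [← SetLike.mem_coe, ← pset_eq_span]
  exact pset_anti hϖ (hν i j l)
    (mul_mem_pset (algebraMap_irreducible_ne_zero hϖ) (hA i j) (hB j l))

theorem one_mem_matrixPset [DecidableEq ι] (hϖ : Irreducible ϖ) {ν : Matrix ι ι ℤ}
    (hν : ∀ i, ν i i ≤ 0) : (1 : Matrix ι ι k) ∈ matrixPset O (algebraMap O k ϖ) ν := by
  intro i j
  rcases eq_or_ne i j with rfl | hij
  · simpa using pset_anti hϖ (hν i) (zpow_mem_pset (O := O) (algebraMap O k ϖ) 0)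
  · simpa [one_apply_ne hij] using zero_mem_pset (O := O) (algebraMap O k ϖ) (ν i j)

variable [IsDomain O] [IsDiscreteValuationRing O]

theorem exists_algebraMap_smul_mem_matrixPset [Finite ι] (hϖ : Irreducible ϖ)
    (ν : Matrix ι ι ℤ) (A : Matrix ι ι k) :
    ∃ c : O, c ≠ 0 ∧ algebraMap O k c • A ∈ matrixPset O (algebraMap O k ϖ) ν := by
  have := Fintype.ofFinite ι
  choose c hc0 hc using fun ij : ι × ι =>
    exists_algebraMap_mul_mem_pset hϖ (A ij.1 ij.2) (ν ij.1 ij.2)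
  refine ⟨∏ ij, c ij, Finset.prod_ne_zero_iff.2 fun ij _ => hc0 ij, fun i j => ?_⟩
  obtain ⟨d, hd⟩ := Finset.dvd_prod_of_mem c (Finset.mem_univ (i, j))
  simpa [hd, mul_comm (c (i, j)), mul_assoc] using algebraMap_mul_mem_pset d (hc (i, j))

end MatrixPset

section SubalgebraMatrix

open Matrix

variable {R A : Type*} [CommSemiring R] [Semiring A] [Algebra R A] {ι : Type*} [Fintype ι]
  [DecidableEq ι] {S : Subalgebra R (Matrix ι ι A)}

theorem Subalgebra.mem_iff_forall_single_mem (hS : ∀ i, single i i 1 ∈ S) {M : Matrix ι ι A} :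
    M ∈ S ↔ ∀ i j, single i j (M i j) ∈ S := by
  refine ⟨fun h i j => by simpa using S.mul_mem (S.mul_mem (hS i) h) (hS j), fun h => ?_⟩
  rw [matrix_eq_sum_single M]
  exact S.sum_mem fun i _ => S.sum_mem fun j _ => h i j

theorem Subalgebra.comap_single_eq_map_entry (hS : ∀ i, single i i 1 ∈ S) (i j : ι) :
    (Subalgebra.toSubmodule S).comap (singleLinearMap R i j) =
      (Subalgebra.toSubmodule S).map (entryLinearMap R A i j) := by
  ext x
  refine ⟨fun hx => ⟨single i j x, hx, by simp⟩, ?_⟩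
  rintro ⟨M, hM, rfl⟩
  exact (Subalgebra.mem_iff_forall_single_mem hS).1 hM i j

end SubalgebraMatrix

section Hijikata

open Matrix

variable {O : Type*} [CommRing O] [IsDomain O] [IsDiscreteValuationRing O] {k : Type*} [Field k]
  [Algebra O k] [IsFractionRing O k] {ϖ : O}

theorem isOrderSet_matrixPset_iff (hϖ : Irreducible ϖ) {n : ℕ} (ν : Matrix (Fin n) (Fin n) ℤ) :
    IsOrderSet O (matrixPset O (algebraMap O k ϖ) ν) ↔
      (∀ i, ν i i ≤ 0) ∧ ∀ i j l, ν i l ≤ ν i j + ν j l := by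
  constructor
  · rintro ⟨S, hS, -⟩
    have hmem (M) : M ∈ S ↔ M ∈ matrixPset O (algebraMap O k ϖ) ν := Set.ext_iff.1 hS M
    refine ⟨fun i => ?_, fun i j l => ?_⟩
    · have h := (hmem 1).1 S.one_mem i i
      rwa [one_apply_eq, ← zpow_zero (algebraMap O k ϖ), zpow_mem_pset_iff hϖ] at h
    · have h := (hmem _).1 <| S.mul_mem
        ((hmem _).2 (single_mem_matrixPset_iff.2 (zpow_mem_pset _ (ν i j))))
        ((hmem _).2 (single_mem_matrixPset_iff.2 (zpow_mem_pset _ (ν j l))))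
      rwa [single_mul_single_same, single_mem_matrixPset_iff,
        ← zpow_add₀ (algebraMap_irreducible_ne_zero hϖ), zpow_mem_pset_iff hϖ] at h
  · rintro ⟨hdiag, htri⟩
    exact ⟨(matrixPsetSubmodule O _ ν).toSubalgebra (one_mem_matrixPset hϖ hdiag)
      (fun _ _ => mul_mem_matrixPset hϖ htri), rfl, matrixPsetSubmodule_fg _ ν,
      exists_algebraMap_smul_mem_matrixPset hϖ ν⟩

theorem exists_coe_eq_matrixPset (hϖ : Irreducible ϖ) {n : ℕ}
    (S : Subalgebra O (Matrix (Fin n) (Fin n) k)) (hS : IsOrder O S)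
    (hR : ∀ d : Fin n → O, diagonal (fun i => algebraMap O k (d i)) ∈ S) :
    ∃ ν : Matrix (Fin n) (Fin n) ℤ, (S : Set (Matrix (Fin n) (Fin n) k)) =
      matrixPset O (algebraMap O k ϖ) ν := by
  have hE (i : Fin n) : single i i (1 : k) ∈ S := by
    simpa [← diagonal_single, Pi.apply_single (fun _ => algebraMap O k)] using hR (Pi.single i 1)
  have hne (i j : Fin n) : (Subalgebra.toSubmodule S).comap (singleLinearMap O i j) ≠ ⊥ := by
    obtain ⟨c, hc0, hc⟩ := hS.2 (single i j 1)
    refine (Submodule.ne_bot_iff _).2 ⟨algebraMap O k c, ?_, by simpa using hc0⟩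
    simpa [Algebra.algebraMap_eq_smul_one] using hc
  choose ν hν using fun i j => exists_coe_eq_pset_of_fg hϖ
    (Subalgebra.comap_single_eq_map_entry hE i j ▸ hS.1.map _) (hne i j)
  refine ⟨of ν, Set.ext fun M => ?_⟩
  rw [SetLike.mem_coe, Subalgebra.mem_iff_forall_single_mem hE]
  exact forall₂_congr fun i j => Set.ext_iff.1 (hν i j) (M i j)

end Hijikata

section Conjugation

open Matrix

variable {O : Type*} [CommRing O] {k : Type*} [Field k] [Algebra O k] {ι : Type*} [Fintype ι]
  [DecidableEq ι]

theorem image_conj_diagonal_zpow_matrixPset {π : k} (hπ : π ≠ 0) (ν : Matrix ι ι ℤ)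
    (m : ι → ℤ) :
    (fun A => diagonal (fun i => π ^ m i) * A * (diagonal fun i => π ^ m i)⁻¹) ''
        matrixPset O π ν =
      matrixPset O π (of fun i j => ν i j + m i - m j) := by
  set D := diagonal fun i => π ^ m i
  set D' := diagonal fun i => π ^ (-m i)
  have hDD' : D * D' = 1 := by
    simp [D, D', diagonal_mul_diagonal, zpow_ne_zero, hπ, ← diagonal_one]
  have hD'D : D' * D = 1 := by
    simp [D, D', diagonal_mul_diagonal, zpow_ne_zero, hπ, ← diagonal_one]
  rw [inv_eq_right_inv hDD', Set.image_eq_preimage_of_inverse (g := fun B => D' * B * D)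
    (fun A => by simp only [Matrix.mul_assoc, hD'D, Matrix.mul_one, ← Matrix.mul_assoc D' D,
      Matrix.one_mul])
    (fun B => by simp only [Matrix.mul_assoc, hDD', Matrix.mul_one, ← Matrix.mul_assoc D D',
      Matrix.one_mul])]
  ext B
  refine forall₂_congr fun i j => ?_
  dsimp only
  rw [show (D' * B * D) i j = B i j * π ^ (m j - m i) by
      simp [D, D', mul_diagonal, diagonal_mul, zpow_sub₀ hπ, _root_.zpow_neg]; ring,
    mul_zpow_mem_pset_iff hπ, of_apply, sub_sub_eq_add_sub, add_sub_assoc]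

end Conjugation

/-- Hijikata's characterization in the case `n = 2`: an order `S` in `M₂(k)`
containing `diag(O,O)` has the form `(O, p^a; p^b, O)` with `a + b ≥ 0`; such a set is
an order iff `a + b ≥ 0`, and is conjugate by `diag(1, π^a)` to `(O, O; p^{a+b}, O)`. -/
theorem stmt18 {O : Type*} [CommRing O] [IsDomain O] [IsDiscreteValuationRing O]
{k : Type*} [Field k] [Algebra O k] [IsFractionRing O k]
    (ϖ : O) (hϖ : Irreducible ϖ) (π : k) (hπ : π = algebraMap O k ϖ)
    (S : Subalgebra O (Matrix (Fin 2) (Fin 2) k)) (hS : IsOrder O S)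
    (hR : ∀ d : Fin 2 → O,
      Matrix.diagonal (fun i => algebraMap O k (d i)) ∈ S) :
    (∃ a b : ℤ, a + b ≥ 0 ∧
      (S : Set (Matrix (Fin 2) (Fin 2) k)) =
        {A | A 0 0 ∈ pset O π 0 ∧ A 0 1 ∈ pset O π a ∧
             A 1 0 ∈ pset O π b ∧ A 1 1 ∈ pset O π 0}) ∧
    (∀ a b : ℤ,
      IsOrderSet O {A : Matrix (Fin 2) (Fin 2) k |
          A 0 0 ∈ pset O π 0 ∧ A 0 1 ∈ pset O π a ∧
          A 1 0 ∈ pset O π b ∧ A 1 1 ∈ pset O π 0} ↔ a + b ≥ 0) ∧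
    (∀ a b : ℤ,
      (fun A => Matrix.diagonal ![(1 : k), π ^ a] * A *
          (Matrix.diagonal ![(1 : k), π ^ a])⁻¹) ''
        {A : Matrix (Fin 2) (Fin 2) k |
          A 0 0 ∈ pset O π 0 ∧ A 0 1 ∈ pset O π a ∧
          A 1 0 ∈ pset O π b ∧ A 1 1 ∈ pset O π 0} =
      {A : Matrix (Fin 2) (Fin 2) k |
          A 0 0 ∈ pset O π 0 ∧ A 0 1 ∈ pset O π 0 ∧
          A 1 0 ∈ pset O π (a + b) ∧ A 1 1 ∈ pset O π 0}) := by
  subst hπ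
  simp only [setOf_fin_two_eq_matrixPset]
  refine ⟨?_, fun a b => ?_, fun a b => ?_⟩
  · obtain ⟨ν, hν⟩ := exists_coe_eq_matrixPset hϖ S hS hR
    obtain ⟨hdiag, htri⟩ := (isOrderSet_matrixPset_iff hϖ ν).1 ⟨S, hν, hS⟩
    have h00 : ν 0 0 = 0 := by linarith [hdiag 0, htri 0 0 0]
    have h11 : ν 1 1 = 0 := by linarith [hdiag 1, htri 1 1 1]
    refine ⟨ν 0 1, ν 1 0, by linarith [htri 0 1 0], ?_⟩
    rw [hν]
    congr 1
    ext i j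
    fin_cases i <;> fin_cases j <;> simp [h00, h11]
  · rw [isOrderSet_matrixPset_iff hϖ]
    simp [Fin.forall_fin_two]
    omega
  · have hdiag : ![(1 : k), algebraMap O k ϖ ^ a] = fun i => algebraMap O k ϖ ^ ![0, a] i := by
      ext i; fin_cases i <;> simp
    rw [hdiag, image_conj_diagonal_zpow_matrixPset (algebraMap_irreducible_ne_zero hϖ)]
    congr 1
    ext i j
    fin_cases i <;> fin_cases j <;> simp [add_comm]
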